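/- For all M, M' ∈ Sp(2n,ℤ), one has φ_{MM'} ≡ φ_M + M φ_{M'} (mod (2ℤ)^{2n}), i.e., every coordinate of φ_{MM'} − φ_M − Mφ_{M'} is an even integer. -/

import Mathlib

open Matrix BigOperators

/-- The standard symplectic bilinear form `σ((q,p),(q',p')) = ⟨p,q'⟩ − ⟨p',q⟩` on `ℤ^{2n}`,
where a vector `x : Fin n ⊕ Fin n → ℤ` has `q`-coordinates `x (Sum.inl i)` and
`p`-coordinates `x (Sum.inr i)`. -/
def sigmaZ (n : ℕ) (x y : Fin n ⊕ Fin n → ℤ) : ℤ :=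
  (∑ i : Fin n, x (Sum.inr i) * y (Sum.inl i)) - ∑ i : Fin n, y (Sum.inr i) * x (Sum.inl i)

/-- `Q((q,p)) = ⟨q,p⟩`. -/
def QZ (n : ℕ) (x : Fin n ⊕ Fin n → ℤ) : ℤ :=
  ∑ i : Fin n, x (Sum.inl i) * x (Sum.inr i)

/-- An integer `2n × 2n` matrix is symplectic if it preserves the standard symplectic
bilinear form (equivalently, its real extension preserves `σ` on all of `ℝ^{2n}`). -/
def IsSymplecticZ (n : ℕ) (M : Matrix (Fin n ⊕ Fin n) (Fin n ⊕ Fin n) ℤ) : Prop :=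
  ∀ x y : Fin n ⊕ Fin n → ℤ, sigmaZ n (M.mulVec x) (M.mulVec y) = sigmaZ n x y

/-!
Both sides are determined by the linear forms `σ(φ, ·) mod 2`. Writing `(MM')⁻¹w = M'⁻¹(M⁻¹w)`,
the defining congruences for `M` at `w` and for `M'` at `M⁻¹w` add up to the one for `MM'`,
so `σ(φ_{MM'}, w) ≡ σ(φ_M, w) + σ(φ_{M'}, M⁻¹w) = σ(φ_M + Mφ_{M'}, w)` by symplecticity.
Since `σ` is unimodular, pairing against the standard basis recovers every coordinate.
-/

section Symplectic

variable {n : ℕ}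

lemma sigmaZ_sub_left (x y w : Fin n ⊕ Fin n → ℤ) :
    sigmaZ n (x - y) w = sigmaZ n x w - sigmaZ n y w := by
  simp only [sigmaZ, Pi.sub_apply, sub_mul, mul_sub, Finset.sum_sub_distrib]
  ring

lemma sigmaZ_single_inl (x : Fin n ⊕ Fin n → ℤ) (j : Fin n) :
    sigmaZ n x (Pi.single (Sum.inl j) 1) = x (Sum.inr j) := by
  simp [sigmaZ, Pi.single_apply]

lemma sigmaZ_single_inr (x : Fin n ⊕ Fin n → ℤ) (j : Fin n) :
    sigmaZ n x (Pi.single (Sum.inr j) 1) = -x (Sum.inl j) := by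
  simp [sigmaZ, Pi.single_apply]

lemma dvd_apply_of_forall_dvd_sigmaZ {d : ℤ} {x : Fin n ⊕ Fin n → ℤ}
    (h : ∀ w, d ∣ sigmaZ n x w) (i : Fin n ⊕ Fin n) : d ∣ x i := by
  rcases i with j | j
  · simpa [sigmaZ_single_inr] using h (Pi.single (Sum.inr j) 1)
  · simpa [sigmaZ_single_inl] using h (Pi.single (Sum.inl j) 1)

lemma IsSymplecticZ.sigmaZ_mulVec_left {M Minv : Matrix (Fin n ⊕ Fin n) (Fin n ⊕ Fin n) ℤ}
    (hM : IsSymplecticZ n M) (hMinv : M * Minv = 1) (x w : Fin n ⊕ Fin n → ℤ) :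
    sigmaZ n (M *ᵥ x) w = sigmaZ n x (Minv *ᵥ w) := by
  conv_lhs => rw [← one_mulVec w, ← hMinv, ← mulVec_mulVec]
  exact hM x (Minv *ᵥ w)

end Symplectic

theorem phi_mul_general (n : ℕ) (M Minv M'inv : Matrix (Fin n ⊕ Fin n) (Fin n ⊕ Fin n) ℤ)
    (hM : IsSymplecticZ n M)
    (hMinv₁ : M * Minv = 1)
    (φM φM' φMM' : Fin n ⊕ Fin n → ℤ)
    (hφM : ∀ w : Fin n ⊕ Fin n → ℤ,
      (2 : ℤ) ∣ (QZ n (Minv.mulVec w) - QZ n w - sigmaZ n φM w))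
    (hφM' : ∀ w : Fin n ⊕ Fin n → ℤ,
      (2 : ℤ) ∣ (QZ n (M'inv.mulVec w) - QZ n w - sigmaZ n φM' w))
    (hφMM' : ∀ w : Fin n ⊕ Fin n → ℤ,
      (2 : ℤ) ∣ (QZ n ((M'inv * Minv).mulVec w) - QZ n w - sigmaZ n φMM' w)) :
    ∀ i, (2 : ℤ) ∣ (φMM' i - φM i - M.mulVec φM' i) := by
  refine dvd_apply_of_forall_dvd_sigmaZ (x := φMM' - φM - M *ᵥ φM') fun w => ?_
  have hsum := dvd_sub (dvd_sub (hφMM' w) (hφM w)) (hφM' (Minv *ᵥ w))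
  rw [← mulVec_mulVec] at hsum
  rw [sigmaZ_sub_left, sigmaZ_sub_left, hM.sigmaZ_mulVec_left hMinv₁, ← dvd_neg]
  convert hsum using 1
  ring

/-- `φ_{MM'} ≡ φ_M + M φ_{M'} (mod (2ℤ)^{2n})`, i.e. every coordinate of
`φ_{MM'} − φ_M − M φ_{M'}` is an even integer.  Here `φM`, `φM'` and `φMM'` are the unique
elements of `{0,1}^{2n}` characterizing `M`, `M'` and `MM'` via
`Q(·⁻¹w) − Q(w) ≡ σ(φ, w) (mod 2)`, and `Minv`, `M'inv` are the inverses of `M`, `M'`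
(so that `(MM')⁻¹ = M'⁻¹M⁻¹`). -/
theorem phi_mul (n : ℕ) (M M' Minv M'inv : Matrix (Fin n ⊕ Fin n) (Fin n ⊕ Fin n) ℤ)
    (hM : IsSymplecticZ n M) (hM' : IsSymplecticZ n M')
    (hMinv₁ : M * Minv = 1) (hMinv₂ : Minv * M = 1)
    (hM'inv₁ : M' * M'inv = 1) (hM'inv₂ : M'inv * M' = 1)
    (φM φM' φMM' : Fin n ⊕ Fin n → ℤ)
    (hφM01 : ∀ i, φM i = 0 ∨ φM i = 1)
    (hφM : ∀ w : Fin n ⊕ Fin n → ℤ,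
      (2 : ℤ) ∣ (QZ n (Minv.mulVec w) - QZ n w - sigmaZ n φM w))
    (hφM'01 : ∀ i, φM' i = 0 ∨ φM' i = 1)
    (hφM' : ∀ w : Fin n ⊕ Fin n → ℤ,
      (2 : ℤ) ∣ (QZ n (M'inv.mulVec w) - QZ n w - sigmaZ n φM' w))
    (hφMM'01 : ∀ i, φMM' i = 0 ∨ φMM' i = 1)
    (hφMM' : ∀ w : Fin n ⊕ Fin n → ℤ,
      (2 : ℤ) ∣ (QZ n ((M'inv * Minv).mulVec w) - QZ n w - sigmaZ n φMM' w)) :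
    ∀ i, (2 : ℤ) ∣ (φMM' i - φM i - M.mulVec φM' i) :=
  phi_mul_general n M Minv M'inv hM hMinv₁ φM φM' φMM' hφM hφM' hφMM'
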